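/- Let a, b be nonzero real numbers with a/b irrational, let k be a positive integer, and let m : ℤ → ℤ be any function. Then the set of complex numbers { (a + 2πikn) / (b + 2πi·m(n)) : n ∈ ℤ } is infinite. -/

import Mathlib

open Complex

lemma Irrational.intCast_eq_zero_of_mul_eq {a b : ℝ} (hab : Irrational (a / b)) {p q : ℤ}
    (h : a * q = b * p) : q = 0 := by
  by_contra hq
  have hb : b ≠ 0 := by rintro rfl; simp at hab
  exact hab ⟨p / q, by push_cast; field_simp; linarith⟩

/-- Cross-multiplying and taking imaginary parts gives `a (q' - q) = b (p' - p)`, which the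
irrationality of `a / b` only allows with `p = p'` and `q = q'`. -/
lemma injective_div_of_irrational {a b : ℝ} (hab : Irrational (a / b)) :
    Function.Injective fun pq : ℤ × ℤ =>
      ((a : ℂ) + 2 * Real.pi * I * pq.1) / ((b : ℂ) + 2 * Real.pi * I * pq.2) := by
  have hb : b ≠ 0 := by rintro rfl; simp at hab
  have hden (q : ℤ) : (b : ℂ) + 2 * Real.pi * I * q ≠ 0 := fun h => hb <| by
    simpa using congrArg re h
  rintro ⟨p, q⟩ ⟨p', q'⟩ h
  rw [div_eq_div_iff (hden q) (hden q')] at h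
  have him : a * ((q' - q : ℤ) : ℝ) = b * ((p' - p : ℤ) : ℝ) := by
    have := congrArg im h
    simp only [mul_im, mul_re, add_im, add_re, ofReal_re, ofReal_im, I_re, I_im,
      intCast_re, intCast_im, re_ofNat, im_ofNat] at this
    push_cast
    nlinarith [Real.pi_pos]
  have hq : q' - q = 0 := hab.intCast_eq_zero_of_mul_eq him
  rw [hq, Int.cast_zero, mul_zero, zero_eq_mul] at him
  have hp : p' - p = 0 := by exact_mod_cast him.resolve_left hb
  simp only [Prod.mk.injEq]
  omega

theorem stmt_0_general (a b : ℝ) (hab : Irrational (a / b))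
    (k : ℕ) (hk : 0 < k) (m : ℤ → ℤ) :
    {z : ℂ | ∃ n : ℤ, z = ((a : ℂ) + 2 * Real.pi * Complex.I * k * n) /
        ((b : ℂ) + 2 * Real.pi * Complex.I * (m n))}.Infinite := by
  set g : ℤ × ℤ → ℂ := fun pq => ((a : ℂ) + 2 * Real.pi * I * pq.1) /
    ((b : ℂ) + 2 * Real.pi * I * pq.2)
  have hkn : Function.Injective fun n : ℤ => ((k * n : ℤ), m n) := fun n₁ n₂ h => by
    simp only [Prod.mk.injEq, mul_eq_mul_left_iff] at h
    omega
  have hset : {z : ℂ | ∃ n : ℤ, z = ((a : ℂ) + 2 * Real.pi * Complex.I * k * n) /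
      ((b : ℂ) + 2 * Real.pi * Complex.I * (m n))} =
        Set.range (g ∘ fun n => ((k * n : ℤ), m n)) := by
    ext z
    simp only [Set.mem_ofPred_eq, Set.mem_range, Function.comp_apply, g, eq_comm (a := z)]
    push_cast
    simp only [mul_assoc]
  rw [hset]
  exact Set.infinite_range_of_injective ((injective_div_of_irrational hab).comp hkn)

theorem stmt_0 (a b : ℝ) (ha : a ≠ 0) (hb : b ≠ 0) (hab : Irrational (a / b))
    (k : ℕ) (hk : 0 < k) (m : ℤ → ℤ) :
    {z : ℂ | ∃ n : ℤ, z = ((a : ℂ) + 2 * Real.pi * Complex.I * k * n) /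
        ((b : ℂ) + 2 * Real.pi * Complex.I * (m n))}.Infinite :=
  stmt_0_general a b hab k hk m
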